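/- For every nontrivial order-automorphism h of (ℚ, <) and every finite set S of nontrivial elements of the free group F₂ on two generators a, b, there exists an order-automorphism g of ℚ such that the homomorphism F₂ → A(ℚ) determined by a ↦ h, b ↦ g sends no element of S to 1. (Hence there is a limit group ⟨A(ℚ), g⟩ over A(ℚ) in which {h, g} is a free basis of a free subgroup of rank 2.) -/

import Mathlib

/-!
`g` is obtained by back and forth from a finite partial isomorphism of `ℚ`, built so that every
automorphism extending it makes each word of `S` act nontrivially. For one reduced word `w`,
follow a point `q₀` moved by `h` through the letters of `w`, read from the right. An `h`-letter
moves the point deterministically; at a `g`-letter the image (or preimage) is chosen fresh: moved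
by `h`, so that a following power of `h` moves it again, and outside the `h`-orbits, up to radius
`|w|`, of every point used so far. Reducedness of `w` then ensures that the trajectory never runs
back into a value of `g` fixed earlier and that it does not end at `q₀`. Finitely many words are
handled one after the other by enlarging the partial isomorphism.
-/

open Filter Topology

namespace Order

theorem exists_mem_isOpen_between_finsets {α : Type*} [LinearOrder α] [TopologicalSpace α]
    [OrderTopology α] [DenselyOrdered α] [NoMinOrder α] [NoMaxOrder α] {U : Set α}
    (hU : IsOpen U) (hUne : U.Nonempty) {lo hi : Finset α} (hlo : ∀ x ∈ lo, x ∈ U)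
    (hhi : ∀ y ∈ hi, y ∈ U) (lo_lt_hi : ∀ x ∈ lo, ∀ y ∈ hi, x < y) (E : Finset α) :
    ∃ m ∈ U, m ∉ E ∧ (∀ x ∈ lo, x < m) ∧ ∀ y ∈ hi, m < y := by
  set W := {m | m ∈ U ∧ (∀ x ∈ lo, x < m) ∧ ∀ y ∈ hi, m < y}
  have hW : IsOpen W := by
    refine isOpen_iff_mem_nhds.2 fun m ⟨hmU, hlo, hhi⟩ ↦ ?_
    filter_upwards [hU.mem_nhds hmU,
      (eventually_all_finset lo).2 fun x hx ↦ eventually_gt_nhds (hlo x hx),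
      (eventually_all_finset hi).2 fun y hy ↦ eventually_lt_nhds (hhi y hy)] with m h₁ h₂ h₃
    exact ⟨h₁, h₂, h₃⟩
  have hWne : W.Nonempty := by
    by_cases hlo_ne : lo.Nonempty
    · set l := lo.max' hlo_ne
      have hl : l ∈ lo := lo.max'_mem hlo_ne
      have : ∀ᶠ m in 𝓝[>] l, m ∈ W := by
        filter_upwards [nhdsWithin_le_nhds (hU.mem_nhds (hlo l hl)), self_mem_nhdsWithin,
          nhdsWithin_le_nhds ((eventually_all_finset hi).2 fun y hy ↦
            eventually_lt_nhds (lo_lt_hi l hl y hy))] with m h₁ h₂ h₃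
        exact ⟨h₁, fun x hx ↦ (lo.le_max' x hx).trans_lt h₂, h₃⟩
      exact this.exists
    by_cases hhi_ne : hi.Nonempty
    · set r := hi.min' hhi_ne
      have hr : r ∈ hi := hi.min'_mem hhi_ne
      have : ∀ᶠ m in 𝓝[<] r, m ∈ W := by
        filter_upwards [nhdsWithin_le_nhds (hU.mem_nhds (hhi r hr)), self_mem_nhdsWithin]
          with m h₁ h₂
        exact ⟨h₁, fun x hx ↦ absurd ⟨x, hx⟩ hlo_ne, fun y hy ↦ h₂.trans_le (hi.min'_le y hy)⟩
      exact this.exists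
    obtain ⟨m, hm⟩ := hUne
    exact ⟨m, hm, fun x hx ↦ absurd ⟨x, hx⟩ hlo_ne, fun y hy ↦ absurd ⟨y, hy⟩ hhi_ne⟩
  have : Nonempty α := ⟨hUne.some⟩
  obtain ⟨a, b, hab, hsub⟩ := hW.exists_Ioo_subset hWne
  obtain ⟨m, hmW, hmE⟩ := ((Set.Ioo_infinite hab).mono hsub).exists_notMem_finset E
  exact ⟨m, hmW.1, hmE, hmW.2⟩

namespace PartialIso

variable {α β : Type*} [LinearOrder α] [LinearOrder β]

def ExtendsTo (f : PartialIso α β) (g : α ≃o β) : Prop := ∀ x ∈ f.val, g x.1 = x.2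

theorem ExtendsTo.mono {f f' : PartialIso α β} {g : α ≃o β} (hff' : f ≤ f')
    (hg : f'.ExtendsTo g) : f.ExtendsTo g :=
  fun x hx ↦ hg x (hff' hx)

theorem exists_orderIso_extendsTo [Countable α] [DenselyOrdered α] [NoMinOrder α] [NoMaxOrder α]
    [Nonempty α] [Countable β] [DenselyOrdered β] [NoMinOrder β] [NoMaxOrder β] [Nonempty β]
    (f : PartialIso α β) : ∃ g : α ≃o β, f.ExtendsTo g := by
  cases nonempty_encodable α
  cases nonempty_encodable β
  let to_cofinal : α ⊕ β → Cofinal (PartialIso α β) := fun p ↦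
    Sum.recOn p (definedAtLeft β) (definedAtRight α)
  let our_ideal : Ideal (PartialIso α β) := idealOfCofinals f to_cofinal
  let F a := funOfIdeal a our_ideal (cofinal_meets_idealOfCofinals _ to_cofinal (Sum.inl a))
  let G b := invOfIdeal b our_ideal (cofinal_meets_idealOfCofinals _ to_cofinal (Sum.inr b))
  refine ⟨OrderIso.ofCmpEqCmp (fun a ↦ (F a).val) (fun b ↦ (G b).val) fun a b ↦ ?_,
    fun x hx ↦ ?_⟩
  · obtain ⟨f₁, hf₁, ha⟩ := (F a).prop
    obtain ⟨f₂, hf₂, hb⟩ := (G b).prop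
    obtain ⟨m, -, hm₁, hm₂⟩ := our_ideal.directed _ hf₁ _ hf₂
    exact m.prop (a, _) (hm₁ ha) (_, b) (hm₂ hb)
  · obtain ⟨f₁, hf₁, ha⟩ := (F x.1).prop
    obtain ⟨m, -, hm₁, hm₂⟩ := our_ideal.directed _ hf₁ _ (mem_idealOfCofinals f to_cofinal)
    have := m.prop (x.1, _) (hm₁ ha) x (hm₂ hx)
    rwa [cmp_self_eq_eq, eq_comm, cmp_eq_eq_iff] at this

def insert (f : PartialIso α β) (a : α) (b : β) (hab : ∀ x ∈ f.val, cmp x.1 a = cmp x.2 b) :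
    PartialIso α β :=
  ⟨Insert.insert (a, b) f.val, fun x hx y hy ↦ by
    rw [Finset.mem_insert] at hx hy
    rcases hx with rfl | hx <;> rcases hy with rfl | hy
    · simp only [cmp_self_eq_eq]
    · rw [cmp_eq_cmp_symm]
      exact hab _ hy
    · exact hab _ hx
    · exact f.prop _ hx _ hy⟩

theorem le_insert (f : PartialIso α β) (a : α) (b : β) (hab) : f ≤ f.insert a b hab :=
  Finset.subset_insert _ _

theorem mk_mem_insert (f : PartialIso α β) (a : α) (b : β) (hab) :
    (a, b) ∈ (f.insert a b hab).val :=
  Finset.mem_insert_self _ _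

theorem exists_across_mem_isOpen [TopologicalSpace β] [OrderTopology β] [DenselyOrdered β]
    [NoMinOrder β] [NoMaxOrder β] (f : PartialIso α β) {a : α} (ha : ∀ b, (a, b) ∉ f.val)
    {U : Set β} (hU : IsOpen U) (hUne : U.Nonempty) (hfU : ∀ x ∈ f.val, x.2 ∈ U)
    (E : Finset β) : ∃ b ∈ U, b ∉ E ∧ ∀ x ∈ f.val, cmp x.1 a = cmp x.2 b := by
  classical
  set lo := {x ∈ f.val | x.1 < a}.image Prod.snd
  set hi := {x ∈ f.val | a < x.1}.image Prod.snd
  have hlo : ∀ y ∈ lo, y ∈ U := by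
    simp only [lo, Finset.mem_image, Finset.mem_filter]
    rintro _ ⟨x, ⟨hx, -⟩, rfl⟩
    exact hfU x hx
  have hhi : ∀ y ∈ hi, y ∈ U := by
    simp only [hi, Finset.mem_image, Finset.mem_filter]
    rintro _ ⟨x, ⟨hx, -⟩, rfl⟩
    exact hfU x hx
  have lo_lt_hi : ∀ y ∈ lo, ∀ z ∈ hi, y < z := by
    simp only [lo, hi, Finset.mem_image, Finset.mem_filter]
    rintro _ ⟨x, ⟨hx, hxa⟩, rfl⟩ _ ⟨x', ⟨hx', hax'⟩, rfl⟩
    exact (lt_iff_lt_of_cmp_eq_cmp (f.prop x hx x' hx')).1 (hxa.trans hax')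
  obtain ⟨b, hbU, hbE, hblo, hbhi⟩ :=
    exists_mem_isOpen_between_finsets hU hUne hlo hhi lo_lt_hi E
  refine ⟨b, hbU, hbE, fun x hx ↦ ?_⟩
  have hxa : x.1 ≠ a := fun he ↦ ha x.2 (he ▸ hx)
  rcases hxa.lt_or_gt with hlt | hgt
  · rw [(cmp_eq_lt_iff _ _).2 hlt, (cmp_eq_lt_iff _ _).2
      (hblo _ (Finset.mem_image_of_mem _ (Finset.mem_filter.2 ⟨hx, hlt⟩)))]
  · rw [(cmp_eq_gt_iff _ _).2 hgt, (cmp_eq_gt_iff _ _).2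
      (hbhi _ (Finset.mem_image_of_mem _ (Finset.mem_filter.2 ⟨hx, hgt⟩)))]

theorem exists_across_mem_isOpen' [TopologicalSpace α] [OrderTopology α] [DenselyOrdered α]
    [NoMinOrder α] [NoMaxOrder α] (f : PartialIso α β) {b : β} (hb : ∀ a, (a, b) ∉ f.val)
    {U : Set α} (hU : IsOpen U) (hUne : U.Nonempty) (hfU : ∀ x ∈ f.val, x.1 ∈ U)
    (E : Finset α) : ∃ a ∈ U, a ∉ E ∧ ∀ x ∈ f.val, cmp x.1 a = cmp x.2 b := by
  have mem_comm : ∀ {a b}, (b, a) ∈ f.comm.val ↔ (a, b) ∈ f.val := by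
    simp [PartialIso.comm, Subtype.map]
  obtain ⟨a, haU, haE, hcmp⟩ := f.comm.exists_across_mem_isOpen (a := b)
    (fun a h ↦ hb a (mem_comm.1 h)) hU hUne (fun x hx ↦ hfU (x.2, x.1) (mem_comm.1 hx)) E
  exact ⟨a, haU, haE, fun x hx ↦ (hcmp (x.2, x.1) (mem_comm.2 hx)).symm⟩

end PartialIso

end Order

theorem FreeGroup.lift_mk_cons {ι G : Type*} [Group G] (f : ι → G) (x : ι × Bool)
    (L : List (ι × Bool)) :
    FreeGroup.lift f (FreeGroup.mk (x :: L)) =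
      (bif x.2 then f x.1 else (f x.1)⁻¹) * FreeGroup.lift f (FreeGroup.mk L) := by
  simp [FreeGroup.lift_mk]

theorem FreeGroup.IsReduced.snd_eq_of_head?_eq {ι : Type*} {a b : ι × Bool}
    {L : List (ι × Bool)} (hL : FreeGroup.IsReduced (a :: L)) (hb : L.head? = some b)
    (h1 : a.1 = b.1) : a.2 = b.2 := by
  obtain _ | ⟨c, L⟩ := L
  · simp at hb
  · obtain rfl : c = b := by simpa using hb
    exact (FreeGroup.isReduced_cons_cons.1 hL).1 h1

namespace OrderAutFreePair

open Order FreeGroup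

section Dynamics

variable {α : Type*} [LinearOrder α] {h : α ≃o α}

theorem exists_apply_ne (hh : h ≠ 1) : ∃ x, h x ≠ x := by
  by_contra! hfix
  exact hh (RelIso.ext hfix)

theorem zpow_apply_ne_self {x : α} (hx : h x ≠ x) {k : ℤ} (hk : k ≠ 0) : (h ^ k) x ≠ x := by
  have succ_apply : ∀ k : ℤ, (h ^ (k + 1)) x = (h ^ k) (h x) := fun k ↦ by
    rw [zpow_add_one]; rfl
  have hinj : Function.Injective fun k : ℤ ↦ (h ^ k) x := by
    rcases hx.lt_or_gt with hlt | hgt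
    · exact (strictAnti_int_of_succ_lt fun k ↦ by
        simpa only [succ_apply] using (h ^ k).strictMono hlt).injective
    · exact (strictMono_int_of_lt_succ fun k ↦ by
        simpa only [succ_apply] using (h ^ k).strictMono hgt).injective
  exact fun hkx ↦ hk (hinj (by simpa using hkx))

theorem apply_zpow_apply_ne {x : α} (hx : h x ≠ x) (k : ℤ) : h ((h ^ k) x) ≠ (h ^ k) x := by
  rw [← RelIso.mul_apply, ← zpow_one_add, add_comm, zpow_add_one, RelIso.mul_apply]
  exact (h ^ k).injective.ne hx

variable [DecidableEq α]

noncomputable def orbitBall (h : α ≃o α) (N : ℕ) (s : Finset α) : Finset α :=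
  (Finset.Icc (-(N : ℤ)) N).biUnion fun k ↦ s.image (h ^ k)

theorem zpow_apply_notMem_of_notMem_orbitBall {N : ℕ} {s : Finset α} {y : α}
    (hy : y ∉ orbitBall h N s) {k : ℤ} (hk : |k| ≤ N) : (h ^ k) y ∉ s := by
  intro hks
  refine hy (Finset.mem_biUnion.2 ⟨-k, Finset.mem_Icc.2 ⟨by grind, by grind⟩,
    Finset.mem_image.2 ⟨_, hks, ?_⟩⟩)
  rw [← RelIso.mul_apply, ← zpow_add, neg_add_cancel, zpow_zero, RelIso.one_apply]

theorem notMem_of_notMem_orbitBall {N : ℕ} {s : Finset α} {y : α}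
    (hy : y ∉ orbitBall h N s) : y ∉ s := by
  simpa using zpow_apply_notMem_of_notMem_orbitBall hy (k := 0) (by simp)

theorem eq_zero_of_zpow_apply_mem_insert {N : ℕ} {s : Finset α} {y : α} (hy : h y ≠ y)
    (hyE : y ∉ orbitBall h N s) {k : ℤ} (hk : |k| ≤ N) (hmem : (h ^ k) y ∈ insert y s) :
    k = 0 := by
  by_contra hk0
  rcases Finset.mem_insert.1 hmem with heq | hmem
  · exact zpow_apply_ne_self hy hk0 heq
  · exact zpow_apply_notMem_of_notMem_orbitBall hyE hk hmem

def points (p : PartialIso α α) : Finset α := p.val.image Prod.fst ∪ p.val.image Prod.snd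

theorem fst_mem_points {p : PartialIso α α} {x : α × α} (hx : x ∈ p.val) : x.1 ∈ points p :=
  Finset.mem_union_left _ (Finset.mem_image_of_mem _ hx)

theorem snd_mem_points {p : PartialIso α α} {x : α × α} (hx : x ∈ p.val) : x.2 ∈ points p :=
  Finset.mem_union_right _ (Finset.mem_image_of_mem _ hx)

theorem points_insert (p : PartialIso α α) (a b : α) (hab) :
    points (p.insert a b hab) = insert a (insert b (points p)) := by
  ext x
  simp only [points, PartialIso.insert, Finset.image_insert, Finset.mem_union, Finset.mem_insert]
  tauto

end Dynamics

section Trail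

variable {α : Type*} [LinearOrder α] [DecidableEq α] (h : α ≃o α) (N : ℕ) (q₀ : α)
  (p₀ : PartialIso α α)

/-- Reading the reduced word `L` from the right, starting at `q₀`, the trajectory is at
`(h ^ e) d`, where `d` is the last point chosen freshly for a `g`-letter (or `q₀`). The
fresh choices keep the `h`-orbit of `d`, up to radius `N`, away from all points defined so far. -/
structure Trail (L : List (Fin 2 × Bool)) where
  p : PartialIso α α
  le : p₀ ≤ p
  moves : ∀ x ∈ points p, h x ≠ x
  d : α
  moves_d : h d ≠ d
  e : ℤ
  apply_eq : ∀ g : α ≃o α, p.ExtendsTo g → lift ![h, g] (mk L) q₀ = (h ^ e) d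
  window : ∀ k : ℤ, |k| ≤ N → (h ^ k) d ∈ insert q₀ (points p) → k = 0
  abs_le : |e| ≤ L.length
  head_of_ne_zero : e ≠ 0 → L.head? = some (0, decide (0 < e))
  head_of_mem_dom : ∀ y, ((h ^ e) d, y) ∈ p.val → L.head? = some (1, false)
  head_of_mem_ran : ∀ x, (x, (h ^ e) d) ∈ p.val → L.head? = some (1, true)
  eq_nil_of_eq : (h ^ e) d = q₀ → L = []

variable {h N q₀ p₀}

def Trail.nil (hq₀ : h q₀ ≠ q₀) (hfresh : q₀ ∉ orbitBall h N (points p₀))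
    (hmoves : ∀ x ∈ points p₀, h x ≠ x) : Trail h N q₀ p₀ [] where
  p := p₀
  le := le_rfl
  moves := hmoves
  d := q₀
  moves_d := hq₀
  e := 0
  apply_eq g _ := by simp
  window _ hk := eq_zero_of_zpow_apply_mem_insert hq₀ hfresh hk
  abs_le := by simp
  head_of_ne_zero := by simp
  head_of_mem_dom _ hy := absurd (by simpa using fst_mem_points hy)
    (notMem_of_notMem_orbitBall hfresh)
  head_of_mem_ran _ hx := absurd (by simpa using snd_mem_points hx)
    (notMem_of_notMem_orbitBall hfresh)
  eq_nil_of_eq _ := rfl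

theorem Trail.nonempty_cons_zero {L : List (Fin 2 × Bool)} (t : Trail h N q₀ p₀ L) {s : Bool}
    (hred : IsReduced ((0, s) :: L)) (hlen : L.length + 1 ≤ N) :
    Nonempty (Trail h N q₀ p₀ ((0, s) :: L)) := by
  set ε : ℤ := bif s then 1 else -1 with hε
  -- reducedness forces a run of `h`-letters to keep one sign, so the exponent cannot return to 0
  have he : ε + t.e ≠ 0 ∧ decide (0 < ε + t.e) = s := by
    by_cases he : t.e = 0
    · cases s <;> simp [hε, he]
    · obtain rfl : s = decide (0 < t.e) := hred.snd_eq_of_head?_eq (t.head_of_ne_zero he) rfl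
      by_cases hpos : 0 < t.e <;> simp [hε, hpos] <;> omega
  have habs : |ε + t.e| ≤ L.length + 1 :=
    (abs_add_le _ _).trans (by have := t.abs_le; cases s <;> simp [hε] <;> omega)
  have hcur : (h ^ (ε + t.e)) t.d ∉ insert q₀ (points t.p) := fun hmem ↦
    he.1 (t.window _ (habs.trans (by exact_mod_cast hlen)) hmem)
  exact ⟨{
    p := t.p
    le := t.le
    moves := t.moves
    d := t.d
    moves_d := t.moves_d
    e := ε + t.e
    apply_eq := fun g hg ↦ by
      rw [lift_mk_cons, RelIso.mul_apply, t.apply_eq g hg, zpow_add, RelIso.mul_apply]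
      cases s <;> simp [hε]
    window := t.window
    abs_le := by simpa using habs
    head_of_ne_zero := fun _ ↦ by simp [he.2]
    head_of_mem_dom := fun y hy ↦ absurd (Finset.mem_insert_of_mem (fst_mem_points hy)) hcur
    head_of_mem_ran := fun x hx ↦ absurd (Finset.mem_insert_of_mem (snd_mem_points hx)) hcur
    eq_nil_of_eq := fun heq ↦ absurd (by rw [heq]; exact Finset.mem_insert_self _ _) hcur }⟩

end Trail

theorem isOpen_setOf_apply_ne {α : Type*} [LinearOrder α] [TopologicalSpace α] [OrderTopology α]
    (h : α ≃o α) : IsOpen {x | h x ≠ x} :=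
  isOpen_ne_fun h.continuous continuous_id

section Steps

variable {α : Type*} [LinearOrder α] [TopologicalSpace α] [OrderTopology α] [DenselyOrdered α]
  [NoMinOrder α] [NoMaxOrder α] [DecidableEq α] {h : α ≃o α} {N : ℕ} {q₀ : α}
  {p₀ : PartialIso α α} {L : List (Fin 2 × Bool)}

theorem Trail.nonempty_cons_one_true (t : Trail h N q₀ p₀ L)
    (hred : IsReduced ((1, true) :: L)) : Nonempty (Trail h N q₀ p₀ ((1, true) :: L)) := by
  set c := (h ^ t.e) t.d
  have hc : ∀ y, (c, y) ∉ t.p.val := fun y hy ↦ by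
    simpa using hred.snd_eq_of_head?_eq (t.head_of_mem_dom y hy) rfl
  obtain ⟨y, hy, hyE, hcmp⟩ := t.p.exists_across_mem_isOpen hc (isOpen_setOf_apply_ne h)
    ⟨t.d, t.moves_d⟩ (fun x hx ↦ t.moves _ (snd_mem_points hx))
    (orbitBall h N (insert q₀ (insert c (points t.p))))
  have hy₀ := notMem_of_notMem_orbitBall hyE
  simp only [Finset.mem_insert, not_or] at hy₀
  exact ⟨{
    p := t.p.insert c y hcmp
    le := t.le.trans (t.p.le_insert _ _ _)
    moves := by
      simp only [points_insert, Finset.mem_insert, forall_eq_or_imp]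
      exact ⟨apply_zpow_apply_ne t.moves_d _, hy, t.moves⟩
    d := y
    moves_d := hy
    e := 0
    apply_eq := fun g hg ↦ by
      rw [lift_mk_cons, RelIso.mul_apply, t.apply_eq g (hg.mono (t.p.le_insert _ _ _))]
      simpa using hg _ (t.p.mk_mem_insert _ _ _)
    window := fun k hk hmem ↦ eq_zero_of_zpow_apply_mem_insert hy hyE hk (by
      simp only [points_insert, Finset.mem_insert] at hmem ⊢
      tauto)
    abs_le := by simp only [abs_zero, List.length_cons]; positivity
    head_of_ne_zero := fun h0 ↦ absurd rfl h0
    head_of_mem_dom := fun z hz ↦ by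
      simp only [zpow_zero, RelIso.one_apply, PartialIso.insert, Finset.mem_insert,
        Prod.mk.injEq] at hz
      rcases hz with ⟨rfl, -⟩ | hz
      · exact absurd rfl hy₀.2.1
      · exact absurd (fst_mem_points hz) hy₀.2.2
    head_of_mem_ran := fun _ _ ↦ rfl
    eq_nil_of_eq := fun heq ↦ absurd (by simpa using heq) hy₀.1 }⟩

theorem Trail.nonempty_cons_one_false (t : Trail h N q₀ p₀ L)
    (hred : IsReduced ((1, false) :: L)) : Nonempty (Trail h N q₀ p₀ ((1, false) :: L)) := by
  set c := (h ^ t.e) t.d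
  have hc : ∀ x, (x, c) ∉ t.p.val := fun x hx ↦ by
    simpa using hred.snd_eq_of_head?_eq (t.head_of_mem_ran x hx) rfl
  obtain ⟨y, hy, hyE, hcmp⟩ := t.p.exists_across_mem_isOpen' hc (isOpen_setOf_apply_ne h)
    ⟨t.d, t.moves_d⟩ (fun x hx ↦ t.moves _ (fst_mem_points hx))
    (orbitBall h N (insert q₀ (insert c (points t.p))))
  have hy₀ := notMem_of_notMem_orbitBall hyE
  simp only [Finset.mem_insert, not_or] at hy₀
  exact ⟨{
    p := t.p.insert y c hcmp
    le := t.le.trans (t.p.le_insert _ _ _)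
    moves := by
      simp only [points_insert, Finset.mem_insert, forall_eq_or_imp]
      exact ⟨hy, apply_zpow_apply_ne t.moves_d _, t.moves⟩
    d := y
    moves_d := hy
    e := 0
    apply_eq := fun g hg ↦ by
      have hgy : g y = (h ^ t.e) t.d := hg _ (t.p.mk_mem_insert _ _ _)
      rw [lift_mk_cons, RelIso.mul_apply, t.apply_eq g (hg.mono (t.p.le_insert _ _ _)), ← hgy]
      simp
    window := fun k hk hmem ↦ eq_zero_of_zpow_apply_mem_insert hy hyE hk (by
      simp only [points_insert, Finset.mem_insert] at hmem ⊢
      tauto)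
    abs_le := by simp only [abs_zero, List.length_cons]; positivity
    head_of_ne_zero := fun h0 ↦ absurd rfl h0
    head_of_mem_dom := fun _ _ ↦ rfl
    head_of_mem_ran := fun z hz ↦ by
      simp only [zpow_zero, RelIso.one_apply, PartialIso.insert, Finset.mem_insert,
        Prod.mk.injEq] at hz
      rcases hz with ⟨-, rfl⟩ | hz
      · exact absurd rfl hy₀.2.1
      · exact absurd (snd_mem_points hz) hy₀.2.2
    eq_nil_of_eq := fun heq ↦ absurd (by simpa using heq) hy₀.1 }⟩

theorem nonempty_trail (hq₀ : h q₀ ≠ q₀) (hfresh : q₀ ∉ orbitBall h N (points p₀))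
    (hmoves : ∀ x ∈ points p₀, h x ≠ x) :
    ∀ L : List (Fin 2 × Bool), IsReduced L → L.length ≤ N → Nonempty (Trail h N q₀ p₀ L)
  | [], _, _ => ⟨Trail.nil hq₀ hfresh hmoves⟩
  | (i, s) :: L, hred, hlen => by
    have hlen' : L.length + 1 ≤ N := by simpa using hlen
    obtain ⟨t⟩ := nonempty_trail hq₀ hfresh hmoves L hred.of_cons (by omega)
    fin_cases i
    · exact t.nonempty_cons_zero hred hlen'
    · cases s
      · exact t.nonempty_cons_one_false hred
      · exact t.nonempty_cons_one_true hred

theorem exists_partialIso_lift_ne_one (hh : h ≠ 1) (p₀ : PartialIso α α)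
    (hmoves : ∀ x ∈ points p₀, h x ≠ x) {w : FreeGroup (Fin 2)} (hw : w ≠ 1) :
    ∃ p : PartialIso α α, p₀ ≤ p ∧ (∀ x ∈ points p, h x ≠ x) ∧
      ∀ g : α ≃o α, p.ExtendsTo g → lift ![h, g] w ≠ 1 := by
  obtain ⟨q₀, hq₀, hfresh, -⟩ := exists_mem_isOpen_between_finsets (isOpen_setOf_apply_ne h)
    (exists_apply_ne hh) (lo := ∅) (hi := ∅) (by simp) (by simp) (by simp)
    (orbitBall h w.toWord.length (points p₀))
  obtain ⟨t⟩ := nonempty_trail hq₀ hfresh hmoves w.toWord isReduced_toWord le_rfl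
  refine ⟨t.p, t.le, t.moves, fun g hg hw₁ ↦ hw (toWord_eq_nil_iff.1 (t.eq_nil_of_eq ?_))⟩
  rw [← t.apply_eq g hg, mk_toWord, hw₁, RelIso.one_apply]

theorem exists_partialIso_forall_lift_ne_one (hh : h ≠ 1) (S : Finset (FreeGroup (Fin 2)))
    (hS : ∀ w ∈ S, w ≠ 1) :
    ∃ p : PartialIso α α, (∀ x ∈ points p, h x ≠ x) ∧
      ∀ g : α ≃o α, p.ExtendsTo g → ∀ w ∈ S, lift ![h, g] w ≠ 1 := by
  induction S using Finset.induction_on with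
  | empty => exact ⟨default, by simp [points, default], by simp⟩
  | insert w S _ ih =>
    obtain ⟨p₁, hp₁, hS₁⟩ := ih fun v hv ↦ hS v (Finset.mem_insert_of_mem hv)
    obtain ⟨p, hp₁p, hp, hw⟩ :=
      exists_partialIso_lift_ne_one hh p₁ hp₁ (hS w (Finset.mem_insert_self _ _))
    refine ⟨p, hp, fun g hg v hv ↦ ?_⟩
    rcases Finset.mem_insert.1 hv with rfl | hv
    · exact hw g hg
    · exact hS₁ g (hg.mono hp₁p) v hv

end Steps

end OrderAutFreePair

/-- **Statement 10.** For every nontrivial order-automorphism `h` of `(ℚ, <)` and every finite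
set `S` of nontrivial elements of the free group on two generators `a, b`, there is an
order-automorphism `g` of `ℚ` such that the homomorphism `F₂ → A(ℚ)`, `a ↦ h`, `b ↦ g`, sends
no element of `S` to `1`. (Hence `{h, g}` is a free basis of a free subgroup of rank 2 in a
suitable limit group over `A(ℚ)`.) -/
theorem exists_free_pair_in_orderAutQ
    (h : ℚ ≃o ℚ) (hh : h ≠ 1)
    (S : Finset (FreeGroup (Fin 2))) (hS : ∀ w ∈ S, w ≠ 1) :
    ∃ g : ℚ ≃o ℚ, ∀ w ∈ S, FreeGroup.lift ![h, g] w ≠ 1 := by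
  obtain ⟨p, -, hp⟩ := OrderAutFreePair.exists_partialIso_forall_lift_ne_one hh S hS
  obtain ⟨g, hg⟩ := p.exists_orderIso_extendsTo
  exact ⟨g, hp g hg⟩
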